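/- Let A, D ∈ ℝ^{n×n} be diagonal with strictly positive diagonal entries and B, C ∈ ℝ^{n×n} entrywise nonnegative. If the spectral radius of M = D⁻¹ C A⁻¹ B satisfies ρ(M) > 1, then the block matrix J = [[−A, B], [C, −D]] has a real eigenvalue λ* > 0 with an eigenvector (x*, y*) satisfying x* ≥ 0, y* ≥ 0 entrywise and y* ≠ 0. -/

import Mathlib

/-!
Shifting `J` by a multiple of the identity makes it entrywise nonnegative, so by
Perron–Frobenius it suffices to find `u ≥ 0`, `u ≠ 0` and `ε > 0` with `ε u ≤ J u`: the
Collatz–Wielandt bound then gives a nonnegative eigenvector of `J` with eigenvalue `≥ ε`.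
For positive matrices the largest such `ε` over the simplex is itself an eigenvalue; nonnegative
matrices follow by a positive perturbation and compactness of the simplex.

The vector `u` comes from an eigenvalue `μ` of `M` with `|μ| > 1`: the moduli `w` of an
eigenvector satisfy `|μ| w ≤ M w`, and for `|μ|⁻¹ < θ < 1` the vector `u = (θ A⁻¹ B w, w)` gives
`J u = ((1 - θ) B w, D (θ M w - w))`, which dominates a small multiple of `u`. Finally `y ≠ 0`,
since `y = 0` turns the first block equation into `-A x = λ x`, forcing `x = 0`.
-/

open Matrix Filter Topology

/-- The spectral radius of a real square matrix: the supremum of the absolute values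
of its complex eigenvalues (roots of the characteristic polynomial over `ℂ`). -/
noncomputable def specRad {n : ℕ} (M : Matrix (Fin n) (Fin n) ℝ) : ℝ :=
  sSup {x : ℝ | ∃ μ : ℂ, (M.map (Complex.ofReal)).charpoly.IsRoot μ ∧ x = ‖μ‖}

theorem exists_pos_smul_le {ι : Type*} [Finite ι] {u z : ι → ℝ} (hz : 0 ≤ z)
    (h : ∀ i, 0 < u i → 0 < z i) : ∃ ε > (0 : ℝ), ε • u ≤ z := by
  have hevent : ∀ i, ∀ᶠ ε in 𝓝[>] (0 : ℝ), ε * u i ≤ z i := by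
    intro i
    rcases le_or_gt (u i) 0 with hu | hu
    · filter_upwards [self_mem_nhdsWithin] with ε hε
      exact (mul_nonpos_of_nonneg_of_nonpos (le_of_lt hε) hu).trans (hz i)
    · have hlim : Tendsto (fun ε => ε * u i) (𝓝[>] 0) (𝓝 0) :=
        ((continuous_mul_const (u i)).tendsto' 0 0 (zero_mul _)).mono_left nhdsWithin_le_nhds
      exact hlim.eventually (ge_mem_nhds (h i hu))
  obtain ⟨ε, hle, hε⟩ := ((eventually_all.2 hevent).and self_mem_nhdsWithin).exists
  exact ⟨ε, hε, hle⟩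

theorem Matrix.fromBlocks_neg_diagonal_nonneg_of_ne {ι : Type*} [DecidableEq ι] (a d : ι → ℝ)
    {B C : Matrix ι ι ℝ} (hB : ∀ i j, 0 ≤ B i j) (hC : ∀ i j, 0 ≤ C i j) :
    ∀ p q, p ≠ q → 0 ≤ fromBlocks (-diagonal a) B C (-diagonal d) p q := by
  rintro (i | i) (j | j) hij
  · simp [ne_of_apply_ne Sum.inl hij]
  · exact hB i j
  · exact hC i j
  · simp [ne_of_apply_ne Sum.inr hij]

section

variable {ι : Type*} [Fintype ι]

theorem inv_sum_smul_mem_stdSimplex {u : ι → ℝ} (hu : 0 ≤ u) (hu0 : u ≠ 0) :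
    (∑ i, u i)⁻¹ • u ∈ stdSimplex ℝ ι := by
  have hsum : 0 < ∑ i, u i := Fintype.sum_pos (lt_of_le_of_ne hu hu0.symm)
  refine ⟨fun i => mul_nonneg (inv_nonneg.2 hsum.le) (hu i), ?_⟩
  simp only [Pi.smul_apply, smul_eq_mul, ← Finset.mul_sum, inv_mul_cancel₀ hsum.ne']

theorem ne_zero_of_mem_stdSimplex {v : ι → ℝ} (hv : v ∈ stdSimplex ℝ ι) : v ≠ 0 := by
  rintro rfl
  simpa using hv.2

namespace Matrix

theorem exists_mem_stdSimplex_smul_le_mulVec {M : Matrix ι ι ℝ} {t : ℝ} {u : ι → ℝ}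
    (hu : 0 ≤ u) (hu0 : u ≠ 0) (h : t • u ≤ M *ᵥ u) :
    ∃ v ∈ stdSimplex ℝ ι, t • v ≤ M *ᵥ v := by
  refine ⟨_, inv_sum_smul_mem_stdSimplex hu hu0, ?_⟩
  rw [smul_comm, mulVec_smul]
  exact smul_le_smul_of_nonneg_left h (inv_nonneg.2 (Finset.sum_nonneg fun i _ => hu i))

theorem mulVec_pos_of_pos {P : Matrix ι ι ℝ} (hP : ∀ i j, 0 < P i j) {v : ι → ℝ}
    (hv : 0 ≤ v) (hv0 : v ≠ 0) (i : ι) : 0 < (P *ᵥ v) i := by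
  obtain ⟨j, hj⟩ := Function.ne_iff.1 hv0
  exact Finset.sum_pos' (fun k _ => mul_nonneg (hP i k).le (hv k))
    ⟨j, Finset.mem_univ j, mul_pos (hP i j) (lt_of_le_of_ne (hv j) (Ne.symm hj))⟩

theorem le_sum_of_smul_le_mulVec {P : Matrix ι ι ℝ} (hP : ∀ i j, 0 ≤ P i j) {t : ℝ}
    {v : ι → ℝ} (hv : v ∈ stdSimplex ℝ ι) (h : t • v ≤ P *ᵥ v) : t ≤ ∑ i, ∑ j, P i j :=
  calc t = ∑ i, t * v i := by rw [← Finset.mul_sum, hv.2, mul_one]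
    _ ≤ ∑ i, ∑ j, P i j * v j := Finset.sum_le_sum fun i _ => h i
    _ ≤ ∑ i, ∑ j, P i j := Finset.sum_le_sum fun i _ => Finset.sum_le_sum fun j _ =>
        mul_le_of_le_one_right (hP i j) ((mem_Icc_of_mem_stdSimplex hv j).2)

theorem exists_eigenvector_mem_stdSimplex_of_pos {P : Matrix ι ι ℝ} (hP : ∀ i j, 0 < P i j)
    {t : ℝ} {u : ι → ℝ} (hu : u ∈ stdSimplex ℝ ι) (h : t • u ≤ P *ᵥ u) :
    ∃ r, t ≤ r ∧ ∃ v ∈ stdSimplex ℝ ι, P *ᵥ v = r • v := by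
  set K := {p : ℝ × (ι → ℝ) | p.2 ∈ stdSimplex ℝ ι ∧ t ≤ p.1 ∧ p.1 • p.2 ≤ P *ᵥ p.2}
  have hK : IsCompact K := by
    refine IsCompact.of_isClosed_subset
      ((isCompact_Icc (a := t) (b := ∑ i, ∑ j, P i j)).prod (isCompact_stdSimplex ℝ ι)) ?_ ?_
    · exact (isClosed_stdSimplex ℝ ι |>.preimage continuous_snd).inter
        ((isClosed_le continuous_const continuous_fst).inter
          (isClosed_le (continuous_fst.smul continuous_snd)
            (continuous_const.matrix_mulVec continuous_snd)))
    · rintro ⟨s, v⟩ ⟨hv, hts, hs⟩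
      exact ⟨⟨hts, le_sum_of_smul_le_mulVec (fun i j => (hP i j).le) hv hs⟩, hv⟩
  obtain ⟨⟨r, v⟩, ⟨hv, htr, hr⟩, hmax⟩ :=
    hK.exists_isMaxOn ⟨(t, u), hu, le_rfl, h⟩ continuous_fst.continuousOn
  refine ⟨r, htr, v, hv, ?_⟩
  by_contra hne
  -- `P` maps the nonzero excess `P v - r v ≥ 0` to a strictly positive vector, so `w = P v`
  -- satisfies `(r + ε) w ≤ P w` for some `ε > 0`, against the maximality of `r`.
  have hexcess : ∀ i, 0 < (P *ᵥ (P *ᵥ v) - r • P *ᵥ v) i := by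
    rw [← mulVec_smul, ← mulVec_sub]
    exact mulVec_pos_of_pos hP (sub_nonneg.2 hr) (sub_ne_zero.2 hne)
  obtain ⟨ε, hε, hεw⟩ := exists_pos_smul_le (fun i => (hexcess i).le) fun i _ => hexcess i
  have hPv := mulVec_pos_of_pos hP hv.1 (ne_zero_of_mem_stdSimplex hv)
  obtain ⟨j, -⟩ := Function.ne_iff.1 (ne_zero_of_mem_stdSimplex hv)
  obtain ⟨w', hw', hrw'⟩ := exists_mem_stdSimplex_smul_le_mulVec (t := r + ε)
    (fun i => (hPv i).le) (fun h0 => (hPv j).ne' (congrFun h0 j))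
    (by rw [add_smul]; exact le_sub_iff_add_le'.1 hεw)
  have : r + ε ≤ r := hmax (a := (r + ε, w')) ⟨hw', by linarith, hrw'⟩
  linarith

theorem exists_eigenvector_mem_stdSimplex_of_nonneg {N : Matrix ι ι ℝ} (hN : ∀ i j, 0 ≤ N i j)
    {t : ℝ} {u : ι → ℝ} (hu : u ∈ stdSimplex ℝ ι) (h : t • u ≤ N *ᵥ u) :
    ∃ r, t ≤ r ∧ ∃ v ∈ stdSimplex ℝ ι, N *ᵥ v = r • v := by
  set P : ℕ → Matrix ι ι ℝ := fun k => N + (1 / ((k : ℝ) + 1)) • of fun _ _ => 1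
  have hPN : Tendsto P atTop (𝓝 N) := by
    have hδ := tendsto_one_div_add_atTop_nhds_zero_nat (𝕜 := ℝ)
    simpa only [zero_smul, add_zero] using (hδ.smul_const (of fun _ _ => (1 : ℝ))).const_add N
  have hP : ∀ k i j, 0 < P k i j := fun k i j => by
    simp only [P, add_apply, smul_apply, of_apply, smul_eq_mul, mul_one]
    exact add_pos_of_nonneg_of_pos (hN i j) (by positivity)
  have hPu : ∀ k, t • u ≤ P k *ᵥ u := fun k => h.trans <| by
    rw [add_mulVec, le_add_iff_nonneg_right, smul_mulVec]
    exact smul_nonneg (by positivity) fun i => Finset.sum_nonneg fun j _ => by simpa using hu.1 j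
  choose r htr v hv hPv using fun k => exists_eigenvector_mem_stdSimplex_of_pos (hP k) hu (hPu k)
  -- On the simplex an eigenvalue of `Q` is the coordinate sum of `Q *ᵥ v`, so the eigenpairs
  -- `(Q, v)` with eigenvalue `≥ t` form a closed set.
  set S := {p : Matrix ι ι ℝ × (ι → ℝ) |
    p.1 *ᵥ p.2 = (∑ i, (p.1 *ᵥ p.2) i) • p.2 ∧ t ≤ ∑ i, (p.1 *ᵥ p.2) i}
  have hS : IsClosed S := by
    have hcont : Continuous fun p : Matrix ι ι ℝ × (ι → ℝ) => p.1 *ᵥ p.2 :=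
      continuous_fst.matrix_mulVec continuous_snd
    have hsum : Continuous fun p : Matrix ι ι ℝ × (ι → ℝ) => ∑ i, (p.1 *ᵥ p.2) i :=
      continuous_finsetSum _ fun i _ => (continuous_apply i).comp hcont
    exact (isClosed_eq hcont (hsum.smul continuous_snd)).inter (isClosed_le continuous_const hsum)
  have hsum_eq : ∀ k, ∑ i, (P k *ᵥ v k) i = r k := fun k => by
    simp [hPv k, ← Finset.mul_sum, (hv k).2]
  obtain ⟨v₀, hv₀, φ, hφ, hvφ⟩ := (isCompact_stdSimplex ℝ ι).tendsto_subseq hv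
  have hmem : (N, v₀) ∈ S := hS.mem_of_tendsto ((hPN.comp hφ.tendsto_atTop).prodMk_nhds hvφ)
    (Eventually.of_forall fun k => show (P (φ k), v (φ k)) ∈ S from
      ⟨by rw [hsum_eq, hPv], (hsum_eq _).symm ▸ htr _⟩)
  exact ⟨_, hmem.2, v₀, hv₀, hmem.1⟩

theorem exists_eigenvector_mem_stdSimplex_of_offDiag_nonneg [DecidableEq ι] {J : Matrix ι ι ℝ}
    (hJ : ∀ i j, i ≠ j → 0 ≤ J i j) {t : ℝ} {u : ι → ℝ} (hu : 0 ≤ u) (hu0 : u ≠ 0)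
    (h : t • u ≤ J *ᵥ u) : ∃ r, t ≤ r ∧ ∃ v ∈ stdSimplex ℝ ι, J *ᵥ v = r • v := by
  set c := ∑ i, |J i i|
  have hN : ∀ i j, 0 ≤ (J + c • 1) i j := by
    intro i j
    rcases eq_or_ne i j with rfl | hij
    · simp only [add_apply, smul_apply, one_apply_eq, smul_eq_mul, mul_one]
      have := Finset.single_le_sum (fun k _ => abs_nonneg (J k k)) (Finset.mem_univ i)
      linarith [neg_abs_le (J i i)]
    · simpa [one_apply_ne hij] using hJ i j hij
  have hshift : ∀ v, (J + c • 1) *ᵥ v = J *ᵥ v + c • v := fun v => by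
    rw [add_mulVec, smul_mulVec, one_mulVec]
  obtain ⟨u', hu', hNu'⟩ := exists_mem_stdSimplex_smul_le_mulVec (t := t + c) hu hu0
    (by rw [hshift, add_smul]; exact add_le_add_left h _)
  obtain ⟨r, htr, v, hv, hNv⟩ := exists_eigenvector_mem_stdSimplex_of_nonneg hN hu' hNu'
  refine ⟨r - c, by linarith, v, hv, ?_⟩
  rw [sub_smul, eq_sub_iff_add_eq, ← hshift, hNv]

theorem inv_diagonal_of_ne_zero {K : Type*} [Field K] [DecidableEq ι] {a : ι → K}
    (ha : ∀ i, a i ≠ 0) : (diagonal a)⁻¹ = diagonal a⁻¹ :=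
  inv_eq_right_inv <| by
    rw [diagonal_mul_diagonal, ← diagonal_one]
    exact congrArg diagonal (funext fun i => mul_inv_cancel₀ (ha i))

theorem exists_mulVec_eq_smul_of_isRoot_charpoly {K : Type*} [Field K] [DecidableEq ι]
    {M : Matrix ι ι K} {μ : K} (h : M.charpoly.IsRoot μ) : ∃ v ≠ 0, M *ᵥ v = μ • v := by
  rw [← charpoly_toLin', ← Module.End.hasEigenvalue_iff_isRoot_charpoly] at h
  obtain ⟨v, hv⟩ := h.exists_hasEigenvector
  exact ⟨v, hv.2, by simpa using hv.apply_eq_smul⟩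

theorem norm_smul_norm_le_mulVec_norm {M : Matrix ι ι ℝ} (hM : ∀ i j, 0 ≤ M i j) {μ : ℂ}
    {v : ι → ℂ} (h : M.map Complex.ofReal *ᵥ v = μ • v) :
    ‖μ‖ • (fun i => ‖v i‖) ≤ M *ᵥ fun i => ‖v i‖ := fun i =>
  calc ‖μ‖ * ‖v i‖ = ‖(M.map Complex.ofReal *ᵥ v) i‖ := by
        rw [h, Pi.smul_apply, smul_eq_mul, norm_mul]
    _ ≤ ∑ j, ‖(M i j : ℂ) * v j‖ := norm_sum_le _ _
    _ = (M *ᵥ fun i => ‖v i‖) i := by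
        simp [mulVec, dotProduct, Complex.norm_real, abs_of_nonneg (hM i _)]

theorem neg_diagonal_mulVec_add_self [DecidableEq ι] {a : ι → ℝ} (ha : ∀ i, a i ≠ 0) (θ : ℝ)
    (g : ι → ℝ) : -diagonal a *ᵥ (θ • (diagonal a⁻¹ *ᵥ g)) + g = (1 - θ) • g := by
  funext i
  simp only [Pi.add_apply, neg_mulVec, Pi.neg_apply, mulVec_smul, Pi.smul_apply, smul_eq_mul,
    mulVec_diagonal, Pi.inv_apply]
  field_simp [ha i]
  ring

theorem smul_diagonal_mulVec_le_of_smul_le_mulVec [DecidableEq ι] {a d : ι → ℝ}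
    (hd : ∀ i, 0 < d i) {B C : Matrix ι ι ℝ} {ρ θ : ℝ} (hθ : 0 ≤ θ) {w : ι → ℝ}
    (hMw : ρ • w ≤ (diagonal d⁻¹ * C * diagonal a⁻¹ * B) *ᵥ w) :
    (θ * ρ - 1) • (diagonal d *ᵥ w) ≤ C *ᵥ (θ • (diagonal a⁻¹ *ᵥ (B *ᵥ w))) + -diagonal d *ᵥ w := by
  intro i
  have hMwi := hMw i
  rw [Pi.smul_apply, smul_eq_mul, ← mulVec_mulVec, ← mulVec_mulVec, ← mulVec_mulVec,
    mulVec_diagonal, Pi.inv_apply, le_inv_mul_iff₀ (hd i)] at hMwi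
  simp only [Pi.smul_apply, Pi.add_apply, mulVec_smul, smul_eq_mul, neg_mulVec, Pi.neg_apply,
    mulVec_diagonal]
  nlinarith

theorem exists_pos_smul_le_fromBlocks_mulVec [DecidableEq ι] {a d : ι → ℝ} (ha : ∀ i, 0 < a i)
    (hd : ∀ i, 0 < d i) {B C : Matrix ι ι ℝ} (hB : ∀ i j, 0 ≤ B i j)
    {ρ : ℝ} (hρ : 1 < ρ) {w : ι → ℝ} (hw : 0 ≤ w) (hw0 : w ≠ 0)
    (hMw : ρ • w ≤ (diagonal d⁻¹ * C * diagonal a⁻¹ * B) *ᵥ w) :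
    ∃ ε > (0 : ℝ), ∃ u, 0 ≤ u ∧ u ≠ 0 ∧
      ε • u ≤ fromBlocks (-diagonal a) B C (-diagonal d) *ᵥ u := by
  obtain ⟨θ, hρθ, hθ1⟩ := exists_between (inv_lt_one_of_one_lt₀ hρ)
  have hθ : 0 < θ := (inv_pos.2 (zero_lt_one.trans hρ)).trans hρθ
  have hθρ : 0 < θ * ρ - 1 := by
    rw [inv_lt_iff_one_lt_mul₀ (zero_lt_one.trans hρ)] at hρθ
    linarith
  set g := B *ᵥ w
  have hg : 0 ≤ g := fun i => Finset.sum_nonneg fun j _ => mul_nonneg (hB i j) (hw j)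
  set x := θ • (diagonal a⁻¹ *ᵥ g)
  have hx_apply : ∀ i, x i = θ * ((a i)⁻¹ * g i) := fun i => by simp [x, mulVec_diagonal]
  have hJu : fromBlocks (-diagonal a) B C (-diagonal d) *ᵥ Sum.elim x w =
      Sum.elim ((1 - θ) • g) (C *ᵥ x + -diagonal d *ᵥ w) := by
    rw [fromBlocks_mulVec, Sum.elim_comp_inl, Sum.elim_comp_inr,
      neg_diagonal_mulVec_add_self (fun i => (ha i).ne')]
  have hJw : ∀ i, (θ * ρ - 1) * (d i * w i) ≤ (C *ᵥ x + -diagonal d *ᵥ w) i := fun i => by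
    simpa only [Pi.smul_apply, smul_eq_mul, mulVec_diagonal] using
      smul_diagonal_mulVec_le_of_smul_le_mulVec (a := a) (B := B) hd hθ.le hMw i
  obtain ⟨ε, hε, hεu⟩ := exists_pos_smul_le (u := Sum.elim x w)
    (z := fromBlocks (-diagonal a) B C (-diagonal d) *ᵥ Sum.elim x w)
    (by
      rw [hJu]
      rintro (i | i)
      · exact mul_nonneg (sub_nonneg.2 hθ1.le) (hg i)
      · exact (mul_nonneg hθρ.le (mul_nonneg (hd i).le (hw i))).trans (hJw i))
    (by
      rw [hJu]
      rintro (i | i) hi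
      · have hgi : 0 < g i := lt_of_le_of_ne (hg i) fun h0 => by simp [hx_apply, ← h0] at hi
        exact mul_pos (sub_pos.2 hθ1) hgi
      · exact (mul_pos hθρ (mul_pos (hd i) hi)).trans_le (hJw i))
  refine ⟨ε, hε, Sum.elim x w, ?_, fun h0 => hw0 (funext fun i => congrFun h0 (Sum.inr i)), hεu⟩
  rintro (i | i)
  · show 0 ≤ x i
    rw [hx_apply]
    exact mul_nonneg hθ.le (mul_nonneg (inv_nonneg.2 (ha i).le) (hg i))
  · exact hw i

theorem eq_zero_of_neg_diagonal_mulVec_eq_smul [DecidableEq ι] {a x : ι → ℝ} {lam : ℝ}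
    (ha : ∀ i, 0 < a i) (hlam : 0 ≤ lam) (h : -diagonal a *ᵥ x = lam • x) : x = 0 :=
  funext fun i => by
    have hi := congrFun h i
    simp only [neg_mulVec, Pi.neg_apply, mulVec_diagonal, Pi.smul_apply, smul_eq_mul] at hi
    have : (a i + lam) * x i = 0 := by linarith
    exact (mul_eq_zero.1 this).resolve_left (by linarith [ha i])

theorem exists_pos_eigenvalue_fromBlocks_neg_diagonal [DecidableEq ι] {a d : ι → ℝ}
    (ha : ∀ i, 0 < a i) (hd : ∀ i, 0 < d i) {B C : Matrix ι ι ℝ} (hB : ∀ i j, 0 ≤ B i j)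
    (hC : ∀ i j, 0 ≤ C i j) {ρ : ℝ} (hρ : 1 < ρ) {w : ι → ℝ} (hw : 0 ≤ w) (hw0 : w ≠ 0)
    (hMw : ρ • w ≤ (diagonal d⁻¹ * C * diagonal a⁻¹ * B) *ᵥ w) :
    ∃ lam > (0 : ℝ), ∃ x y : ι → ℝ, 0 ≤ x ∧ 0 ≤ y ∧ y ≠ 0 ∧
      -diagonal a *ᵥ x + B *ᵥ y = lam • x ∧ C *ᵥ x + -diagonal d *ᵥ y = lam • y := by
  obtain ⟨ε, hε, u, hu, hu0, hJu⟩ := exists_pos_smul_le_fromBlocks_mulVec ha hd hB hρ hw hw0 hMw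
  obtain ⟨lam, hεlam, z, hz, hJz⟩ := exists_eigenvector_mem_stdSimplex_of_offDiag_nonneg
    (fromBlocks_neg_diagonal_nonneg_of_ne a d hB hC) hu hu0 hJu
  rw [fromBlocks_mulVec] at hJz
  have hJx : -diagonal a *ᵥ (z ∘ Sum.inl) + B *ᵥ (z ∘ Sum.inr) = lam • (z ∘ Sum.inl) :=
    funext fun i => congrFun hJz (Sum.inl i)
  have hJy : C *ᵥ (z ∘ Sum.inl) + -diagonal d *ᵥ (z ∘ Sum.inr) = lam • (z ∘ Sum.inr) :=
    funext fun i => congrFun hJz (Sum.inr i)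
  have hlam := hε.trans_le hεlam
  refine ⟨lam, hlam, z ∘ Sum.inl, z ∘ Sum.inr, fun i => hz.1 _, fun i => hz.1 _, fun hy => ?_,
    hJx, hJy⟩
  have hx := eq_zero_of_neg_diagonal_mulVec_eq_smul ha hlam.le (by simpa [hy] using hJx)
  exact ne_zero_of_mem_stdSimplex hz (by rw [← Sum.elim_comp_inl_inr z, hx, hy, Sum.elim_zero_zero])

end Matrix

end

theorem exists_isRoot_charpoly_lt_norm_of_lt_specRad {n : ℕ} {M : Matrix (Fin n) (Fin n) ℝ}
    {t : ℝ} (ht : 0 ≤ t) (h : t < specRad M) :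
    ∃ μ : ℂ, (M.map Complex.ofReal).charpoly.IsRoot μ ∧ t < ‖μ‖ := by
  have hne : {x : ℝ | ∃ μ : ℂ, (M.map Complex.ofReal).charpoly.IsRoot μ ∧ x = ‖μ‖}.Nonempty := by
    by_contra hempty
    rw [Set.not_nonempty_iff_eq_empty] at hempty
    rw [specRad, hempty, Real.sSup_empty] at h
    linarith
  obtain ⟨_, ⟨μ, hμ, rfl⟩, htμ⟩ := exists_lt_of_lt_csSup hne h
  exact ⟨μ, hμ, htμ⟩

/-- Schur–Perron positive eigenvalue: with `A, D` diagonal positive and `B, C`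
entrywise nonnegative, if `ρ(D⁻¹ C A⁻¹ B) > 1` then the block matrix
`J = [[−A, B], [C, −D]]` has a real eigenvalue `λ* > 0` with a nonnegative
eigenvector `(x*, y*)`, `y* ≠ 0`. -/
theorem schur_perron_positive_eigenvalue (n : ℕ) (A B C D : Matrix (Fin n) (Fin n) ℝ)
    (hAdiag : ∀ i j, i ≠ j → A i j = 0) (hApos : ∀ i, 0 < A i i)
    (hDdiag : ∀ i j, i ≠ j → D i j = 0) (hDpos : ∀ i, 0 < D i i)
    (hB : ∀ i j, 0 ≤ B i j) (hC : ∀ i j, 0 ≤ C i j)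
    (hρ : 1 < specRad (D⁻¹ * C * A⁻¹ * B)) :
    ∃ lam : ℝ, 0 < lam ∧ ∃ x y : Fin n → ℝ,
      (∀ i, 0 ≤ x i) ∧ (∀ i, 0 ≤ y i) ∧ y ≠ 0 ∧
      (-A) *ᵥ x + B *ᵥ y = lam • x ∧
      C *ᵥ x + (-D) *ᵥ y = lam • y := by
  obtain ⟨a, rfl⟩ : ∃ a, A = diagonal a := ⟨A.diag, (IsDiag.diagonal_diag hAdiag).symm⟩
  obtain ⟨d, rfl⟩ : ∃ d, D = diagonal d := ⟨D.diag, (IsDiag.diagonal_diag hDdiag).symm⟩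
  simp only [diagonal_apply_eq] at hApos hDpos
  rw [inv_diagonal_of_ne_zero fun i => (hApos i).ne',
    inv_diagonal_of_ne_zero fun i => (hDpos i).ne'] at hρ
  have hM : ∀ i j, 0 ≤ (diagonal d⁻¹ * C * diagonal a⁻¹ * B) i j := fun i j => by
    rw [mul_apply]
    refine Finset.sum_nonneg fun k _ => ?_
    rw [mul_diagonal, diagonal_mul]
    exact mul_nonneg (mul_nonneg (mul_nonneg (inv_nonneg.2 (hDpos i).le) (hC i k))
      (inv_nonneg.2 (hApos k).le)) (hB k j)
  obtain ⟨μ, hroot, hμ⟩ := exists_isRoot_charpoly_lt_norm_of_lt_specRad zero_le_one hρ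
  obtain ⟨v, hv0, hv⟩ := exists_mulVec_eq_smul_of_isRoot_charpoly hroot
  exact exists_pos_eigenvalue_fromBlocks_neg_diagonal hApos hDpos hB hC hμ
    (fun i => norm_nonneg (v i)) (fun h0 => hv0 (funext fun i => norm_eq_zero.1 (congrFun h0 i)))
    (norm_smul_norm_le_mulVec_norm hM hv)
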